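/- The operator A satisfies a restricted weak type (1,1) inequality: for every measurable set B ⊆ [0,1) and every λ > 0, m{x ∈ (0,1) : A(1_B)(x) > λ} ≤ (1/λ)·m(B). -/

import Mathlib

/-!
If `A(1_B)(x) > λ`, some `t > 0` gives `t · m(B ∩ (x - 1/t, x]) > λ`; with
`c = max (x - 1/t) 0` this says `m(B ∩ (c, x]) > λ (x - c)`, i.e. `g x < g c` for
`g x = λ x - m(B ∩ (-∞, x])`. So `x` lies in the shadow `U` of the graph of `g` for light coming
from the left, as in F. Riesz's rising sun lemma. The running maximum `k x = max_{[0, x]} g` is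
`λ`-Lipschitz, and it takes only countably many values on `U`: if `x ∈ U` and the maximum is
attained at `y`, then `y < x` and `k` is constant on `[y, x]`, which contains a rational. Hence
`λ - m(B) = g 1 - g 0 ≤ k 1 - k 0 ≤ m(k '' ([0, 1] \ U)) ≤ λ (1 - m(U))`,
i.e. `λ m(U) ≤ m(B)`.
-/

open MeasureTheory Set
open scoped ENNReal NNReal

noncomputable def Aop (f : ℝ → ℝ) (x : ℝ) : ℝ≥0∞ :=
  ⨆ t : {t : ℝ // 0 < t},
    ENNReal.ofReal t.1 * volume {y ∈ Ioo (0 : ℝ) x | |f (x - y)| / y > t.1}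

section RisingSun

variable {g : ℝ → ℝ} {a b x y : ℝ} {L : ℝ≥0}

noncomputable def runningMax (g : ℝ → ℝ) (a x : ℝ) : ℝ := sSup (g '' Icc a x)

def shadow (g : ℝ → ℝ) (a b : ℝ) : Set ℝ := {x ∈ Ioo a b | g x < runningMax g a x}

lemma le_runningMax (hg : Continuous g) (hy : y ∈ Icc a x) : g y ≤ runningMax g a x :=
  le_csSup (isCompact_Icc.bddAbove_image hg.continuousOn) (mem_image_of_mem g hy)

lemma runningMax_le {c : ℝ} (hx : a ≤ x) (h : ∀ y ∈ Icc a x, g y ≤ c) :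
    runningMax g a x ≤ c :=
  csSup_le ((nonempty_Icc.2 hx).image g) (forall_mem_image.2 h)

lemma exists_eq_runningMax (hg : Continuous g) (hx : a ≤ x) :
    ∃ y ∈ Icc a x, g y = runningMax g a x :=
  (isCompact_Icc.image hg).sSup_mem ((nonempty_Icc.2 hx).image g)

@[simp]
lemma runningMax_self : runningMax g a a = g a := by
  simp [runningMax]

lemma runningMax_mono (hg : Continuous g) (hx : a ≤ x) (hxy : x ≤ y) :
    runningMax g a x ≤ runningMax g a y :=
  runningMax_le hx fun _ hz => le_runningMax hg ⟨hz.1, hz.2.trans hxy⟩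

lemma runningMax_le_add (hg : Continuous g)
    (hgL : ∀ x y, x ≤ y → g y ≤ g x + L * (y - x)) (hx : a ≤ x) (hxy : x ≤ y) :
    runningMax g a y ≤ runningMax g a x + L * (y - x) := by
  refine runningMax_le (hx.trans hxy) fun z hz => ?_
  rcases le_total z x with hzx | hxz
  · have := le_runningMax hg ⟨hz.1, hzx⟩
    nlinarith [L.2]
  · have := le_runningMax hg ⟨hx, le_refl x⟩
    nlinarith [hgL x z hxz, hz.2, L.2]

lemma lipschitzOnWith_runningMax (hg : Continuous g)
    (hgL : ∀ x y, x ≤ y → g y ≤ g x + L * (y - x)) :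
    LipschitzOnWith L (runningMax g a) (Ici a) :=
  LipschitzOnWith.of_le_add_mul L fun x hx y hy => by
    rcases le_total x y with hxy | hyx
    · exact (runningMax_mono hg hx hxy).trans (le_add_of_nonneg_right (by positivity))
    · rw [Real.dist_eq, abs_of_nonneg (sub_nonneg.2 hyx)]
      exact runningMax_le_add hg hgL hy hyx

lemma isOpen_shadow (hg : Continuous g) (hgL : ∀ x y, x ≤ y → g y ≤ g x + L * (y - x)) :
    IsOpen (shadow g a b) := by
  have hk : ContinuousOn (runningMax g a) (Ioo a b) :=
    (lipschitzOnWith_runningMax hg hgL).continuousOn.mono fun x hx => hx.1.le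
  have : shadow g a b = Ioo a b ∩ (fun x => runningMax g a x - g x) ⁻¹' Ioi 0 := by
    ext x
    simp [shadow]
  rw [this]
  exact (hk.sub hg.continuousOn).isOpen_inter_preimage isOpen_Ioo isOpen_Ioi

lemma countable_image_runningMax_shadow (hg : Continuous g) :
    (runningMax g a '' shadow g a b).Countable := by
  refine ((countable_range ((↑) : ℚ → ℝ)).image (runningMax g a)).mono ?_
  rintro _ ⟨x, ⟨⟨hax, -⟩, hlt⟩, rfl⟩
  obtain ⟨y, ⟨hay, hyx⟩, hy⟩ := exists_eq_runningMax hg hax.le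
  obtain ⟨q, hyq, hqx⟩ := exists_rat_btwn (hyx.lt_of_ne (by rintro rfl; exact hlt.ne hy))
  exact ⟨q, mem_range_self q, (runningMax_mono hg (hay.trans hyq.le) hqx.le).antisymm
    (hy ▸ le_runningMax hg ⟨hay, hyq.le⟩)⟩

theorem sub_add_mul_measureReal_shadow_le (hg : Continuous g)
    (hgL : ∀ x y, x ≤ y → g y ≤ g x + L * (y - x)) (hab : a ≤ b) :
    g b - g a + L * volume.real (shadow g a b) ≤ L * (b - a) := by
  set k := runningMax g a
  set U := shadow g a b
  have hk : LipschitzOnWith L k (Ici a) := lipschitzOnWith_runningMax hg hgL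
  have hkU : volume (k '' U) = 0 := (countable_image_runningMax_shadow hg).measure_zero _
  have himage : ENNReal.ofReal (k b - k a) ≤ L * volume (Icc a b \ U) :=
    calc ENNReal.ofReal (k b - k a) = volume (Icc (k a) (k b)) := Real.volume_Icc.symm
      _ ≤ volume (k '' Icc a b) :=
          measure_mono (intermediate_value_Icc hab (hk.continuousOn.mono fun x hx => hx.1))
      _ = volume (k '' Icc a b \ k '' U) := (measure_sdiff_null hkU).symm
      _ ≤ volume (k '' (Icc a b \ U)) := measure_mono fun _ ⟨⟨x, hx, hxk⟩, hnot⟩ =>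
          ⟨x, ⟨hx, fun hxU => hnot ⟨x, hxU, hxk⟩⟩, hxk⟩
      _ ≤ L * volume (Icc a b \ U) := by
          simpa [hausdorffMeasure_real] using
            (hk.mono fun x hx => hx.1.1).hausdorffMeasure_image_le zero_le_one
  have hC : volume.real (Icc a b \ U) = b - a - volume.real U := by
    rw [measureReal_sdiff (fun x hx => Ioo_subset_Icc_self hx.1)
      (isOpen_shadow hg hgL).measurableSet measure_Icc_lt_top.ne, Real.volume_real_Icc_of_le hab]
  have hCfin : volume (Icc a b \ U) ≠ ∞ :=
    measure_ne_top_of_subset sdiff_subset measure_Icc_lt_top.ne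
  rw [ENNReal.ofReal_le_iff_le_toReal (ENNReal.mul_ne_top ENNReal.coe_ne_top hCfin),
    ENNReal.toReal_mul, ENNReal.coe_toReal, ← measureReal_def, hC] at himage
  have hgb : g b ≤ k b := le_runningMax hg ⟨hab, le_rfl⟩
  simp only [k, runningMax_self] at himage hgb
  linarith

end RisingSun

section DistributionFunction

variable {μ : Measure ℝ} {B : Set ℝ} {x y : ℝ}

lemma measureReal_inter_Iic_add_Ioc (hB : μ B ≠ ∞) (hxy : x ≤ y) :
    μ.real (B ∩ Iic x) + μ.real (B ∩ Ioc x y) = μ.real (B ∩ Iic y) := by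
  have hsplit := measureReal_inter_add_sdiff (measurableSet_Iic (a := x))
    (measure_ne_top_of_subset (inter_subset_left (t := Iic y)) hB)
  rwa [inter_assoc, Iic_inter_Iic, min_eq_right hxy, inter_sdiff_assoc, Iic_sdiff_Iic] at hsplit

lemma monotone_measureReal_inter_Iic (hB : μ B ≠ ∞) :
    Monotone fun x => μ.real (B ∩ Iic x) :=
  fun _ _ hxy => measureReal_mono (inter_subset_inter_right B (Iic_subset_Iic.2 hxy))
    (measure_ne_top_of_subset inter_subset_left hB)

lemma lipschitzWith_measureReal_inter_Iic (hB : volume B ≠ ∞) :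
    LipschitzWith 1 fun x => volume.real (B ∩ Iic x) :=
  LipschitzWith.of_le_add fun x y => by
    rcases le_total x y with hxy | hyx
    · exact le_add_of_le_of_nonneg (monotone_measureReal_inter_Iic hB hxy) dist_nonneg
    · rw [← measureReal_inter_Iic_add_Ioc hB hyx, Real.dist_eq, abs_of_nonneg (sub_nonneg.2 hyx)]
      gcongr
      exact (measureReal_mono inter_subset_right measure_Ioc_lt_top.ne).trans_eq
        (Real.volume_real_Ioc_of_le hyx)

end DistributionFunction

section Aop

variable {B : Set ℝ} {lam : ℝ}

lemma volume_setOf_indicator_div_gt_le (B : Set ℝ) {t : ℝ} (ht : 0 < t) (x : ℝ) :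
    volume {y ∈ Ioo (0 : ℝ) x | |B.indicator (fun _ => (1 : ℝ)) (x - y)| / y > t} ≤
      volume (B ∩ Ioc (max (x - 1 / t) 0) x) := by
  refine (measure_mono fun y hy => ?_).trans
    ((Measure.measurePreserving_sub_left volume x).measure_preimage_le _)
  obtain ⟨⟨hy0, hyx⟩, hyt⟩ := hy
  by_cases hyB : x - y ∈ B
  · rw [indicator_of_mem hyB, abs_one, gt_iff_lt, lt_div_iff₀ hy0] at hyt
    have : y < 1 / t := by rw [lt_div_iff₀ ht]; linarith
    exact ⟨hyB, max_lt (by linarith) (by linarith), by linarith⟩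
  · rw [indicator_of_notMem hyB, abs_zero, zero_div] at hyt
    exact absurd ht hyt.not_gt

lemma exists_lt_measureReal_of_lt_Aop (hB : volume B ≠ ∞) {x : ℝ} (hx : 0 < x)
    (h : ENNReal.ofReal lam < Aop (B.indicator fun _ => 1) x) :
    ∃ c ∈ Ico 0 x, lam * (x - c) < volume.real (B ∩ Ioc c x) := by
  obtain ⟨⟨t, ht⟩, hlt⟩ := lt_iSup_iff.1 h
  set c := max (x - 1 / t) 0
  have hcx : c < x := max_lt (by linarith [one_div_pos.2 ht]) hx
  have htc : t * (x - c) ≤ 1 := by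
    have : x - 1 / t ≤ c := le_max_left _ _
    have := mul_le_mul_of_nonneg_left (show x - c ≤ 1 / t by linarith) ht.le
    rwa [mul_one_div_cancel ht.ne'] at this
  have hlam : lam < t * volume.real (B ∩ Ioc c x) := by
    have := hlt.trans_le (mul_le_mul_right (volume_setOf_indicator_div_gt_le B ht x) _)
    rw [← ofReal_measureReal (measure_ne_top_of_subset inter_subset_left hB),
      ← ENNReal.ofReal_mul ht.le, ENNReal.ofReal_lt_ofReal_iff'] at this
    exact this.1
  refine ⟨c, ⟨le_max_right _ _, hcx⟩, ?_⟩
  nlinarith [measureReal_nonneg (μ := volume) (s := B ∩ Ioc c x)]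

lemma continuous_mul_sub_measureReal_inter_Iic (hB : volume B ≠ ∞) :
    Continuous fun x => lam * x - volume.real (B ∩ Iic x) :=
  (continuous_const_mul lam).sub (lipschitzWith_measureReal_inter_Iic hB).continuous

lemma setOf_lt_Aop_subset_shadow (hB : volume B ≠ ∞) :
    {x ∈ Ioo (0 : ℝ) 1 | ENNReal.ofReal lam < Aop (B.indicator fun _ => 1) x} ⊆
      shadow (fun x => lam * x - volume.real (B ∩ Iic x)) 0 1 := by
  rintro x ⟨hx, hAx⟩
  obtain ⟨c, ⟨hc0, hcx⟩, hlt⟩ := exists_lt_measureReal_of_lt_Aop hB hx.1 hAx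
  have hsplit := measureReal_inter_Iic_add_Ioc hB hcx.le
  refine ⟨hx, lt_of_lt_of_le ?_
    (le_runningMax (continuous_mul_sub_measureReal_inter_Iic hB) ⟨hc0, hcx.le⟩)⟩
  linarith

lemma mul_measureReal_shadow_le (hB : B ⊆ Ico 0 1) (hlam : 0 ≤ lam) :
    lam * volume.real (shadow (fun x => lam * x - volume.real (B ∩ Iic x)) 0 1) ≤
      volume.real B := by
  have hBfin : volume B ≠ ∞ := measure_ne_top_of_subset hB measure_Ico_lt_top.ne
  have hgL : ∀ x y : ℝ, x ≤ y → lam * y - volume.real (B ∩ Iic y) ≤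
      lam * x - volume.real (B ∩ Iic x) + lam.toNNReal * (y - x) := fun x y hxy => by
    have := monotone_measureReal_inter_Iic hBfin hxy
    rw [Real.coe_toNNReal _ hlam]
    linarith
  have h0 : volume.real (B ∩ Iic 0) = 0 := by
    have : B ∩ Iic 0 ⊆ {0} := fun x hx => le_antisymm hx.2 (hB hx.1).1
    rw [Measure.real, measure_mono_null this (measure_singleton 0), ENNReal.toReal_zero]
  have h1 : B ∩ Iic 1 = B := inter_eq_left.2 fun x hx => (hB hx).2.le
  have := sub_add_mul_measureReal_shadow_le (continuous_mul_sub_measureReal_inter_Iic hBfin) hgL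
    zero_le_one
  rw [h0, h1, Real.coe_toNNReal _ hlam] at this
  linarith

end Aop

theorem Aop_restricted_weak_type_one_one_general
    (B : Set ℝ) (hB' : B ⊆ Ico (0 : ℝ) 1)
    (lam : ℝ) (hlam : 0 < lam) :
    volume {x ∈ Ioo (0 : ℝ) 1 |
        ENNReal.ofReal lam < Aop (Set.indicator B (fun _ => (1 : ℝ))) x} ≤
      ENNReal.ofReal (1 / lam) * volume B := by
  set U := shadow (fun x => lam * x - volume.real (B ∩ Iic x)) 0 1
  have hB : volume B ≠ ∞ := measure_ne_top_of_subset hB' measure_Ico_lt_top.ne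
  have hU : volume.real U ≤ 1 / lam * volume.real B := by
    rw [one_div_mul_eq_div, le_div_iff₀ hlam, mul_comm]
    exact mul_measureReal_shadow_le hB' hlam.le
  calc _ ≤ volume U := measure_mono (setOf_lt_Aop_subset_shadow hB)
    _ = ENNReal.ofReal (volume.real U) := (ofReal_measureReal
          (measure_ne_top_of_subset (fun x hx => hx.1) measure_Ioo_lt_top.ne)).symm
    _ ≤ ENNReal.ofReal (1 / lam * volume.real B) := ENNReal.ofReal_le_ofReal hU
    _ = ENNReal.ofReal (1 / lam) * volume B := by
        rw [ENNReal.ofReal_mul (by positivity), ofReal_measureReal hB]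

/-- The operator `A` satisfies a restricted weak type `(1,1)` inequality: on
characteristic functions of measurable subsets of `[0,1)`,
`m{x ∈ (0,1) : A(1_B)(x) > λ} ≤ (1/λ)·m(B)` for every `λ > 0`. -/
theorem Aop_restricted_weak_type_one_one
    (B : Set ℝ) (hB : MeasurableSet B) (hB' : B ⊆ Ico (0 : ℝ) 1)
    (lam : ℝ) (hlam : 0 < lam) :
    volume {x ∈ Ioo (0 : ℝ) 1 |
        ENNReal.ofReal lam < Aop (Set.indicator B (fun _ => (1 : ℝ))) x} ≤
      ENNReal.ofReal (1 / lam) * volume B :=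
  Aop_restricted_weak_type_one_one_general B hB' lam hlam
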